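/- (One-step dual distance inequality, proof of Lemma 3) Let λ ∈ ℝᵐ, η ≥ 0, let x⁺ ∈ ℝⁿ be an η-approximate solution of the AL subproblem at λ, and set λ⁺ := λ + β(Ax⁺ − b). If λ* is a maximizer of d (d(μ) ≤ d(λ*) for all μ ∈ ℝᵐ), then ‖λ⁺ − λ*‖² ≤ ‖λ − λ*‖² + 2βη. -/

import Mathlib

/-!
Write `r := A x⁺ - b`, so that `λ⁺ = λ + β r`. The gradient inequality for `f` together with
the approximate optimality of `x⁺` bounds the augmented Lagrangian at `λ⁺` from below, hence
`d(λ⁺) ≥ f(x⁺) + g(x⁺) + ⟪λ⁺, r⟫ - η`, while testing the infimum defining `d(λ*)` at `x⁺` gives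
`d(λ*) ≤ f(x⁺) + g(x⁺) + ⟪λ*, r⟫ + β/2 ‖r‖²`. As `d(λ⁺) ≤ d(λ*)`, this yields
`⟪λ⁺ - λ*, r⟫ ≤ η + β/2 ‖r‖²`, and expanding `‖λ⁺ - λ*‖² = ‖(λ - λ*) + β r‖²` finishes the proof.
-/

open RealInnerProductSpace

theorem ConvexOn.add_fderiv_sub_le {E : Type*} [NormedAddCommGroup E] [NormedSpace ℝ E]
    {f : E → ℝ} {f' : E →L[ℝ] ℝ} {x : E} (hf : ConvexOn ℝ Set.univ f)
    (hx : HasFDerivAt f f' x) (y : E) :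
    f x + f' (y - x) ≤ f y := by
  set ℓ : ℝ →ᵃ[ℝ] E := AffineMap.lineMap x y with hℓ
  have hline : ConvexOn ℝ Set.univ (f ∘ ℓ) := by simpa using hf.comp_affineMap ℓ
  have hderiv : HasDerivAt (f ∘ ℓ) (f' (y - x)) 0 := by
    refine HasFDerivAt.comp_hasDerivAt (0 : ℝ) ?_ AffineMap.hasDerivAt_lineMap
    simpa [hℓ] using hx
  have hslope := hline.le_slope_of_hasDerivAt (Set.mem_univ 0) (Set.mem_univ 1) one_pos hderiv
  simp only [slope_def_field, Function.comp_apply, hℓ, AffineMap.lineMap_apply_zero,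
    AffineMap.lineMap_apply_one, sub_zero, div_one] at hslope
  linarith

theorem ConvexOn.add_inner_sub_le_of_hasGradientAt {F : Type*} [NormedAddCommGroup F]
    [InnerProductSpace ℝ F] [CompleteSpace F] {f : F → ℝ} {f' x : F}
    (hf : ConvexOn ℝ Set.univ f) (hx : HasGradientAt f f' x) (y : F) :
    f x + ⟪f', y - x⟫ ≤ f y := by
  simpa using hf.add_fderiv_sub_le (hasGradientAt_iff_hasFDerivAt.mp hx) y

theorem norm_add_smul_sub_sq_le {F : Type*} [NormedAddCommGroup F] [InnerProductSpace ℝ F]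
    {lam μ r : F} {β η : ℝ} (hβ : 0 ≤ β) (h : ⟪lam + β • r - μ, r⟫ ≤ η + β / 2 * ‖r‖ ^ 2) :
    ‖lam + β • r - μ‖ ^ 2 ≤ ‖lam - μ‖ ^ 2 + 2 * β * η := by
  have hsplit : lam + β • r - μ = (lam - μ) + β • r := by abel
  rw [hsplit, inner_add_left, real_inner_smul_left, real_inner_self_eq_norm_sq] at h
  rw [hsplit, norm_add_sq_real, real_inner_smul_right, norm_smul, mul_pow, Real.norm_eq_abs,
    sq_abs]
  nlinarith [mul_le_mul_of_nonneg_left h (by positivity : (0 : ℝ) ≤ 2 * β)]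

section AugmentedLagrangian

variable {E F : Type*} [NormedAddCommGroup E] [InnerProductSpace ℝ E]
  [NormedAddCommGroup F] [InnerProductSpace ℝ F]

noncomputable def augLagrangian (f g : E → ℝ) (A : E →L[ℝ] F) (b : F) (β : ℝ) (x : E)
    (lam : F) : ℝ :=
  f x + ⟪lam, A x - b⟫ + β / 2 * ‖A x - b‖ ^ 2 + g x

variable [CompleteSpace E] [CompleteSpace F]

/-- `xp` is an `η`-approximate minimizer of `augLagrangian f g A b β · lam`, with `f'` standing
for `∇f`. -/
def IsApproxALSolution (g : E → ℝ) (f' : E → E) (A : E →L[ℝ] F) (b : F) (β η : ℝ) (lam : F)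
    (xp : E) : Prop :=
  ∀ x, ⟪f' xp + A.adjoint (lam + β • (A xp - b)), xp - x⟫ + g xp - g x ≤ η

theorem IsApproxALSolution.sub_le_augLagrangian {f g : E → ℝ} {f' : E → E} {A : E →L[ℝ] F}
    {b : F} {β η : ℝ} {lam : F} {xp : E} (happrox : IsApproxALSolution g f' A b β η lam xp)
    (hf : ConvexOn ℝ Set.univ f) (hf' : HasGradientAt f (f' xp) xp) (hβ : 0 ≤ β) (y : E) :
    f xp + g xp + ⟪lam + β • (A xp - b), A xp - b⟫ - η
      ≤ augLagrangian f g A b β y (lam + β • (A xp - b)) := by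
  set μ := lam + β • (A xp - b)
  have hgrad := hf.add_inner_sub_le_of_hasGradientAt hf' y
  have hopt := happrox y
  rw [inner_add_left, ContinuousLinearMap.adjoint_inner_left, map_sub] at hopt
  have hsplit : ⟪μ, A xp - A y⟫ + ⟪μ, A y - b⟫ = ⟪μ, A xp - b⟫ := by
    rw [← inner_add_right, sub_add_sub_cancel]
  have hflip : ⟪f' xp, y - xp⟫ = -⟪f' xp, xp - y⟫ := by
    rw [← inner_neg_right, neg_sub]
  have hpenalty : 0 ≤ β / 2 * ‖A y - b‖ ^ 2 := by positivity
  unfold augLagrangian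
  linarith

end AugmentedLagrangian

theorem ial_one_step_dual_distance_general
    {n m : ℕ}
    (A : EuclideanSpace ℝ (Fin n) →L[ℝ] EuclideanSpace ℝ (Fin m))
    (b : EuclideanSpace ℝ (Fin m))
    (f g : EuclideanSpace ℝ (Fin n) → ℝ)
    (f' : EuclideanSpace ℝ (Fin n) → EuclideanSpace ℝ (Fin n))
    (hf : ConvexOn ℝ Set.univ f)
    (hf' : ∀ x, HasGradientAt f (f' x) x)
    (β : ℝ) (hβ : 0 < β)
    (L : EuclideanSpace ℝ (Fin n) → EuclideanSpace ℝ (Fin m) → ℝ)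
    (hL : ∀ x lam, L x lam
        = f x + ⟪lam, A x - b⟫ + β / 2 * ‖A x - b‖ ^ 2 + g x)
    (d : EuclideanSpace ℝ (Fin m) → ℝ)
    (hd : ∀ lam, IsLeast (Set.range fun x => L x lam) (d lam))
    (lam : EuclideanSpace ℝ (Fin m))
    (η : ℝ)
    (xp : EuclideanSpace ℝ (Fin n))
    (happrox : ∀ y,
        ⟪f' xp + A.adjoint (lam + β • (A xp - b)), xp - y⟫ + g xp - g y ≤ η)
    (lamstar : EuclideanSpace ℝ (Fin m))
    (hstar : ∀ μ, d μ ≤ d lamstar) :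
    ‖(lam + β • (A xp - b)) - lamstar‖ ^ 2 ≤ ‖lam - lamstar‖ ^ 2 + 2 * β * η := by
  obtain rfl : L = augLagrangian f g A b β := funext fun x => funext (hL x)
  set r := A xp - b
  set lamp := lam + β • r
  obtain ⟨x₀, hx₀⟩ := (hd lamp).1
  have hlower : f xp + g xp + ⟪lamp, r⟫ - η ≤ d lamp :=
    hx₀ ▸ IsApproxALSolution.sub_le_augLagrangian happrox hf (hf' xp) hβ.le x₀
  have hupper : d lamstar ≤ augLagrangian f g A b β xp lamstar := (hd lamstar).2 ⟨xp, rfl⟩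
  unfold augLagrangian at hupper
  have hascent : ⟪lamp - lamstar, r⟫ ≤ η + β / 2 * ‖r‖ ^ 2 := by
    rw [inner_sub_left]
    linarith [hstar lamp]
  exact norm_add_smul_sub_sq_le hβ.le hascent

/-- **One-step dual distance inequality (proof of Lemma 3).**
Let `x⁺` be an `η`-approximate solution of the AL subproblem at `λ` and set
`λ⁺ := λ + β(Ax⁺ − b)`. If `λ*` maximizes `d`, then
`‖λ⁺ − λ*‖² ≤ ‖λ − λ*‖² + 2βη`. -/
theorem ial_one_step_dual_distance
    {n m : ℕ}
    (A : EuclideanSpace ℝ (Fin n) →L[ℝ] EuclideanSpace ℝ (Fin m))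
    (b : EuclideanSpace ℝ (Fin m))
    (f g : EuclideanSpace ℝ (Fin n) → ℝ)
    (f' : EuclideanSpace ℝ (Fin n) → EuclideanSpace ℝ (Fin n))
    (hf : ConvexOn ℝ Set.univ f)
    (hf' : ∀ x, HasGradientAt f (f' x) x)
    (hg : ConvexOn ℝ Set.univ g)
    (β : ℝ) (hβ : 0 < β)
    (L : EuclideanSpace ℝ (Fin n) → EuclideanSpace ℝ (Fin m) → ℝ)
    (hL : ∀ x lam, L x lam
        = f x + ⟪lam, A x - b⟫ + β / 2 * ‖A x - b‖ ^ 2 + g x)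
    (d : EuclideanSpace ℝ (Fin m) → ℝ)
    (hd : ∀ lam, IsLeast (Set.range fun x => L x lam) (d lam))
    (lam : EuclideanSpace ℝ (Fin m))
    (η : ℝ) (hη : 0 ≤ η)
    (xp : EuclideanSpace ℝ (Fin n))
    (happrox : ∀ y,
        ⟪f' xp + A.adjoint (lam + β • (A xp - b)), xp - y⟫ + g xp - g y ≤ η)
    (lamstar : EuclideanSpace ℝ (Fin m))
    (hstar : ∀ μ, d μ ≤ d lamstar) :
    ‖(lam + β • (A xp - b)) - lamstar‖ ^ 2 ≤ ‖lam - lamstar‖ ^ 2 + 2 * β * η :=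
  ial_one_step_dual_distance_general A b f g f' hf hf' β hβ L hL d hd lam η xp happrox lamstar hstar
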